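/- Let (T, Γ) be a Γ-semigroup, H a Γ-two-sided ideal of T, and Q a Γ-prime ideal of T with H ∩ Q nonempty. Then H ∩ Q is a Γ-prime ideal of the Γ-semigroup H: it is a Γ-two-sided ideal of H, and for all Γ-two-sided ideals E, F of H, EΓF ⊆ H ∩ Q implies E ⊆ H ∩ Q or F ⊆ H ∩ Q. -/

import Mathlib

/-- The set product AΓB = {aγb : a ∈ A, γ ∈ Γ, b ∈ B} for a Γ-semigroup
with multiplication `mul : T → G → T → T`. -/
def gprod {T G : Type*} (mul : T → G → T → T) (A B : Set T) : Set T :=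
  {x | ∃ a ∈ A, ∃ γ : G, ∃ b ∈ B, x = mul a γ b}

/-- A nonempty subset B with TΓB ⊆ B. -/
def IsLeftIdeal {T G : Type*} (mul : T → G → T → T) (B : Set T) : Prop :=
  B.Nonempty ∧ gprod mul Set.univ B ⊆ B

/-- A nonempty subset B with BΓT ⊆ B. -/
def IsRightIdeal {T G : Type*} (mul : T → G → T → T) (B : Set T) : Prop :=
  B.Nonempty ∧ gprod mul B Set.univ ⊆ B

/-- A Γ-two-sided ideal. -/
def IsTwoSidedIdeal {T G : Type*} (mul : T → G → T → T) (B : Set T) : Prop :=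
  IsLeftIdeal mul B ∧ IsRightIdeal mul B

/-- z is a zero element: eαz = zαe = z for all e, α. -/
def IsZero {T G : Type*} (mul : T → G → T → T) (z : T) : Prop :=
  ∀ (e : T) (α : G), mul e α z = z ∧ mul z α e = z

/-- A least Γ-left ideal: every Γ-left ideal contained in it equals it. -/
def IsLeastLeftIdeal {T G : Type*} (mul : T → G → T → T) (H : Set T) : Prop :=
  IsLeftIdeal mul H ∧ ∀ B : Set T, IsLeftIdeal mul B → B ⊆ H → B = H

/-- A least Γ-two-sided ideal. -/
def IsLeastTwoSidedIdeal {T G : Type*} (mul : T → G → T → T) (A : Set T) : Prop :=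
  IsTwoSidedIdeal mul A ∧ ∀ B : Set T, IsTwoSidedIdeal mul B → B ⊆ A → B = A

/-- A 0-least Γ-left ideal. -/
def IsZeroLeastLeftIdeal {T G : Type*} (mul : T → G → T → T) (z : T) (H : Set T) : Prop :=
  IsLeftIdeal mul H ∧ H ≠ {z} ∧
    ∀ B : Set T, IsLeftIdeal mul B → B ⊆ H → B = {z} ∨ B = H

/-- A 0-least Γ-right ideal. -/
def IsZeroLeastRightIdeal {T G : Type*} (mul : T → G → T → T) (z : T) (H : Set T) : Prop :=
  IsRightIdeal mul H ∧ H ≠ {z} ∧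
    ∀ B : Set T, IsRightIdeal mul B → B ⊆ H → B = {z} ∨ B = H

/-- A 0-least Γ-two-sided ideal. -/
def IsZeroLeastTwoSidedIdeal {T G : Type*} (mul : T → G → T → T) (z : T) (H : Set T) : Prop :=
  IsTwoSidedIdeal mul H ∧ H ≠ {z} ∧
    ∀ B : Set T, IsTwoSidedIdeal mul B → B ⊆ H → B = {z} ∨ B = H

/-- 0-simple: TΓT ≠ {0} and the only Γ-two-sided ideals are {0} and T. -/
def IsZeroSimple {T G : Type*} (mul : T → G → T → T) (z : T) : Prop :=
  gprod mul Set.univ Set.univ ≠ {z} ∧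
    ∀ B : Set T, IsTwoSidedIdeal mul B → B = {z} ∨ B = Set.univ

/-- e is an idempotent: eαe = e for some α. -/
def IsIdempotent {T G : Type*} (mul : T → G → T → T) (e : T) : Prop :=
  ∃ α : G, mul e α e = e

/-- The partial order on idempotents: e ≤ f iff exf = fye = e for some x, y ∈ Γ. -/
def IdemLe {T G : Type*} (mul : T → G → T → T) (e f : T) : Prop :=
  ∃ x y : G, mul e x f = e ∧ mul f y e = e

/-- A primitive idempotent: nonzero, and minimal among nonzero idempotents. -/
def IsPrimitiveIdempotent {T G : Type*} (mul : T → G → T → T) (z e : T) : Prop :=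
  e ≠ z ∧ IsIdempotent mul e ∧
    ∀ f : T, f ≠ z → IsIdempotent mul f → IdemLe mul f e → f = e

/-- Completely 0-simple: 0-simple with a primitive idempotent. -/
def IsCompletelyZeroSimple {T G : Type*} (mul : T → G → T → T) (z : T) : Prop :=
  IsZeroSimple mul z ∧ ∃ e : T, IsPrimitiveIdempotent mul z e

/-- Green's relation L: e L f iff {e} ∪ TΓe = {f} ∪ TΓf. -/
def LRel {T G : Type*} (mul : T → G → T → T) (e f : T) : Prop :=
  insert e (gprod mul Set.univ {e}) = insert f (gprod mul Set.univ {f})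

/-- Green's relation R: e R f iff {e} ∪ eΓT = {f} ∪ fΓT. -/
def RRel {T G : Type*} (mul : T → G → T → T) (e f : T) : Prop :=
  insert e (gprod mul {e} Set.univ) = insert f (gprod mul {f} Set.univ)

/-- Green's relation D = L ∘ R. -/
def DRel {T G : Type*} (mul : T → G → T → T) (e f : T) : Prop :=
  ∃ c : T, LRel mul e c ∧ RRel mul c f

/-- The Γ-two-sided ideal generated by e: {e} ∪ TΓe ∪ eΓT ∪ TΓeΓT. -/
def GenTwo {T G : Type*} (mul : T → G → T → T) (e : T) : Set T :=
  {e} ∪ gprod mul Set.univ {e} ∪ gprod mul {e} Set.univ ∪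
    gprod mul (gprod mul Set.univ {e}) Set.univ

/-- A Γ-prime ideal. -/
def IsPrimeIdeal {T G : Type*} (mul : T → G → T → T) (Q : Set T) : Prop :=
  IsTwoSidedIdeal mul Q ∧
    ∀ E F : Set T, IsTwoSidedIdeal mul E → IsTwoSidedIdeal mul F →
      gprod mul E F ⊆ Q → E ⊆ Q ∨ F ⊆ Q

/-- A Γ-two-sided ideal of the Γ-semigroup H (a subset of T closed as an ideal of H). -/
def IsTwoSidedIdealIn {T G : Type*} (mul : T → G → T → T) (H B : Set T) : Prop :=
  B.Nonempty ∧ B ⊆ H ∧ gprod mul H B ⊆ B ∧ gprod mul B H ⊆ B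

/-! A Γ-prime ideal Q is prime elementwise: if aΓ({b} ∪ TΓb) ⊆ Q then a ∈ Q or b ∈ Q, since
the colon A = {x | xΓ({b} ∪ TΓb) ⊆ Q} and the colon {y | AΓy ⊆ Q} are Γ-two-sided ideals
of T containing a and b whose product lies in Q.

Given ideals E, F of H with EΓF ⊆ Q, take e ∈ E \ Q and f ∈ F. The element x = eγtδf = (eγt)δf
and all sζx lie in F, so eΓ({x} ∪ TΓx) ⊆ EΓF ⊆ Q, whence x ∈ Q. Thus eΓ({f} ∪ TΓf) ⊆ Q,
whence f ∈ Q. -/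

def IsGammaAssoc {T G : Type*} (mul : T → G → T → T) : Prop :=
  ∀ (e f g : T) (α β : G), mul (mul e α f) β g = mul e α (mul f β g)

def leftColon {T G : Type*} (mul : T → G → T → T) (Q L : Set T) : Set T :=
  {x | gprod mul {x} L ⊆ Q}

def rightColon {T G : Type*} (mul : T → G → T → T) (Q A : Set T) : Set T :=
  {y | gprod mul A {y} ⊆ Q}

section GammaSemigroup

variable {T G : Type*} {mul : T → G → T → T}

theorem mem_gprod {A B : Set T} {a b : T} (ha : a ∈ A) (γ : G) (hb : b ∈ B) :
    mul a γ b ∈ gprod mul A B :=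
  ⟨a, ha, γ, b, hb, rfl⟩

theorem gprod_subset_iff {A B C : Set T} :
    gprod mul A B ⊆ C ↔ ∀ a ∈ A, ∀ γ : G, ∀ b ∈ B, mul a γ b ∈ C := by
  constructor
  · exact fun h a ha γ b hb => h (mem_gprod ha γ hb)
  · rintro h _ ⟨a, ha, γ, b, hb, rfl⟩
    exact h a ha γ b hb

theorem IsLeftIdeal.mul_mem {B : Set T} (hB : IsLeftIdeal mul B) (t : T) (γ : G) {b : T}
    (hb : b ∈ B) : mul t γ b ∈ B :=
  hB.2 (mem_gprod (Set.mem_univ t) γ hb)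

theorem IsRightIdeal.mul_mem {B : Set T} (hB : IsRightIdeal mul B) {b : T} (hb : b ∈ B)
    (γ : G) (t : T) : mul b γ t ∈ B :=
  hB.2 (mem_gprod hb γ (Set.mem_univ t))

theorem isLeftIdeal_insert_gprod_univ (assoc : IsGammaAssoc mul) (b : T) :
    IsLeftIdeal mul (insert b (gprod mul Set.univ {b})) := by
  refine ⟨⟨b, Set.mem_insert b _⟩, gprod_subset_iff.2 ?_⟩
  rintro s - γ _ (rfl | ⟨t, -, α, _, rfl, rfl⟩)
  · exact Or.inr (mem_gprod (Set.mem_univ s) γ (Set.mem_singleton _))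
  · rw [← assoc]
    exact Or.inr (mem_gprod (Set.mem_univ _) α (Set.mem_singleton _))

theorem isTwoSidedIdeal_leftColon (assoc : IsGammaAssoc mul) {Q L : Set T}
    (hQ : IsLeftIdeal mul Q) (hL : IsLeftIdeal mul L) (hne : (leftColon mul Q L).Nonempty) :
    IsTwoSidedIdeal mul (leftColon mul Q L) := by
  refine ⟨⟨hne, gprod_subset_iff.2 ?_⟩, ⟨hne, gprod_subset_iff.2 ?_⟩⟩
  · rintro s - γ x hx
    refine gprod_subset_iff.2 ?_
    rintro _ rfl α l hl
    rw [assoc]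
    exact hQ.mul_mem s γ (hx (mem_gprod (Set.mem_singleton _) α hl))
  · rintro x hx γ s -
    refine gprod_subset_iff.2 ?_
    rintro _ rfl α l hl
    rw [assoc]
    exact hx (mem_gprod (Set.mem_singleton _) γ (hL.mul_mem s α hl))

theorem isTwoSidedIdeal_rightColon (assoc : IsGammaAssoc mul) {Q A : Set T}
    (hQ : IsRightIdeal mul Q) (hA : IsRightIdeal mul A) (hne : (rightColon mul Q A).Nonempty) :
    IsTwoSidedIdeal mul (rightColon mul Q A) := by
  refine ⟨⟨hne, gprod_subset_iff.2 ?_⟩, ⟨hne, gprod_subset_iff.2 ?_⟩⟩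
  · rintro s - γ y hy
    refine gprod_subset_iff.2 ?_
    rintro x hx α _ rfl
    rw [← assoc]
    exact hy (mem_gprod (hA.mul_mem hx α s) γ (Set.mem_singleton _))
  · rintro y hy γ s -
    refine gprod_subset_iff.2 ?_
    rintro x hx α _ rfl
    rw [← assoc]
    exact hQ.mul_mem (hy (mem_gprod hx α (Set.mem_singleton _))) γ s

theorem IsPrimeIdeal.mem_or_mem (assoc : IsGammaAssoc mul) {Q : Set T}
    (hQ : IsPrimeIdeal mul Q) {a b : T}
    (hab : gprod mul {a} (insert b (gprod mul Set.univ {b})) ⊆ Q) : a ∈ Q ∨ b ∈ Q := by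
  set A := leftColon mul Q (insert b (gprod mul Set.univ {b}))
  have ha : a ∈ A := hab
  have hA : IsTwoSidedIdeal mul A :=
    isTwoSidedIdeal_leftColon assoc hQ.1.1 (isLeftIdeal_insert_gprod_univ assoc b) ⟨a, ha⟩
  have hb : b ∈ rightColon mul Q A := by
    refine gprod_subset_iff.2 ?_
    intro x hx γ y (hy : y = b)
    rw [hy]
    exact hx (mem_gprod (Set.mem_singleton _) γ (Set.mem_insert b _))
  have hB := isTwoSidedIdeal_rightColon assoc hQ.1.2 hA.2 ⟨b, hb⟩
  have hAB : gprod mul A (rightColon mul Q A) ⊆ Q :=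
    gprod_subset_iff.2 fun x hx γ y hy => hy (mem_gprod hx γ (Set.mem_singleton _))
  exact (hQ.2 _ _ hA hB hAB).imp (· ha) (· hb)

theorem isTwoSidedIdealIn_inter {H Q : Set T} (hH : gprod mul H H ⊆ H)
    (hQ : IsTwoSidedIdeal mul Q) (hne : (H ∩ Q).Nonempty) :
    IsTwoSidedIdealIn mul H (H ∩ Q) := by
  refine ⟨hne, Set.inter_subset_left, gprod_subset_iff.2 ?_, gprod_subset_iff.2 ?_⟩
  · exact fun h hh γ x hx => ⟨hH (mem_gprod hh γ hx.1), hQ.1.mul_mem h γ hx.2⟩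
  · exact fun x hx γ h hh => ⟨hH (mem_gprod hx.1 γ hh), hQ.2.mul_mem hx.2 γ h⟩

theorem IsPrimeIdeal.subset_or_subset_of_isTwoSidedIdealIn (assoc : IsGammaAssoc mul)
    {H Q E F : Set T} (hH : IsTwoSidedIdeal mul H) (hQ : IsPrimeIdeal mul Q)
    (hE : IsTwoSidedIdealIn mul H E) (hF : IsTwoSidedIdealIn mul H F)
    (hEF : gprod mul E F ⊆ Q) : E ⊆ Q ∨ F ⊆ Q := by
  refine or_iff_not_imp_left.2 fun hEQ f hf => ?_
  obtain ⟨e, he, heQ⟩ := Set.not_subset.1 hEQ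
  have heH : e ∈ H := hE.2.1 he
  have hHf : ∀ h ∈ H, ∀ δ : G, mul h δ f ∈ F := fun h hh δ =>
    hF.2.2.1 (mem_gprod hh δ hf)
  have mem_of_mul_mem : ∀ y ∈ F, (∀ (γ : G) (t : T) (δ : G), mul e γ (mul t δ y) ∈ Q) →
      y ∈ Q := by
    refine fun y hy hety =>
      (hQ.mem_or_mem assoc (gprod_subset_iff.2 ?_)).resolve_left heQ
    rintro _ rfl γ _ (rfl | ⟨t, -, δ, _, rfl, rfl⟩)
    · exact hEF (mem_gprod he γ hy)
    · exact hety γ t δ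
  refine mem_of_mul_mem f hf fun γ t δ =>
    mem_of_mul_mem _ ?_ fun ε s ζ => hEF (mem_gprod he ε ?_)
  · rw [← assoc]
    exact hHf _ (hH.2.mul_mem heH γ t) δ
  · rw [← assoc e, ← assoc]
    exact hHf _ (hH.1.mul_mem s ζ (hH.2.mul_mem heH γ t)) δ

end GammaSemigroup

theorem inter_with_prime_is_prime_in_H_general {T G : Type*}
    (mul : T → G → T → T)
    (assoc : ∀ (e f g : T) (α β : G), mul (mul e α f) β g = mul e α (mul f β g))
    (H : Set T) (hH : IsTwoSidedIdeal mul H)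
    (Q : Set T) (hQ : IsPrimeIdeal mul Q)
    (hne : (H ∩ Q).Nonempty) :
    IsTwoSidedIdealIn mul H (H ∩ Q) ∧
      ∀ E F : Set T, IsTwoSidedIdealIn mul H E → IsTwoSidedIdealIn mul H F →
        gprod mul E F ⊆ H ∩ Q → E ⊆ H ∩ Q ∨ F ⊆ H ∩ Q := by
  have hHH : gprod mul H H ⊆ H :=
    gprod_subset_iff.2 fun h _ γ _ hh' => hH.1.mul_mem h γ hh'
  refine ⟨isTwoSidedIdealIn_inter hHH hQ.1 hne, fun E F hE hF hEF => ?_⟩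
  have hEF' : gprod mul E F ⊆ Q := hEF.trans Set.inter_subset_right
  exact (hQ.subset_or_subset_of_isTwoSidedIdealIn assoc hH hE hF hEF').imp
    (fun hEQ => Set.subset_inter hE.2.1 hEQ) (fun hFQ => Set.subset_inter hF.2.1 hFQ)

theorem inter_with_prime_is_prime_in_H {T G : Type*} [Nonempty T] [Nonempty G]
    (mul : T → G → T → T)
    (assoc : ∀ (e f g : T) (α β : G), mul (mul e α f) β g = mul e α (mul f β g))
    (H : Set T) (hH : IsTwoSidedIdeal mul H)
    (Q : Set T) (hQ : IsPrimeIdeal mul Q)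
    (hne : (H ∩ Q).Nonempty) :
    IsTwoSidedIdealIn mul H (H ∩ Q) ∧
      ∀ E F : Set T, IsTwoSidedIdealIn mul H E → IsTwoSidedIdealIn mul H F →
        gprod mul E F ⊆ H ∩ Q → E ⊆ H ∩ Q ∨ F ⊆ H ∩ Q :=
  inter_with_prime_is_prime_in_H_general mul assoc H hH Q hQ hne
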